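/- Let k be a field, V a k-vector space of finite dimension d, x₁,…,xₙ pairwise commuting k-linear endomorphisms of V, and v₁,…,v_r ∈ V. Then the smallest k-subspace of V containing v₁,…,v_r and invariant under x₁,…,xₙ equals V (i.e. the tuple (x₁,…,xₙ,v₁,…,v_r) is stable) if and only if the finite set { x₁^{a₁} ∘ x₂^{a₂} ∘ ⋯ ∘ xₙ^{aₙ} (vⱼ) : 0 ≤ aᵢ ≤ d−1 for all i, 1 ≤ j ≤ r } spans V over k. -/

import Mathlib

/-!
The span `S` of the words `x^a (vⱼ)` with all exponents `aᵢ ≤ d - 1` contains every `vⱼ` and is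
stable under each `xᵢ`: by Cayley–Hamilton `xᵢ ^ (aᵢ + 1)` is a linear combination of
`1, xᵢ, …, xᵢ ^ (d - 1)`, and since the `xᵢ` commute the factor `xᵢ ^ (aᵢ + 1)` can be moved to
the `i`-th slot of the word. So stability forces `S = ⊤`. Conversely every invariant subspace
containing the `vⱼ` contains all words applied to them, hence contains `S`.
-/

open Polynomial in
theorem Module.End.pow_mem_span_pow_lt_finrank {R M : Type*} [CommRing R] [Nontrivial R]
    [AddCommGroup M] [Module R M] [Module.Free R M] [Module.Finite R M]
    (f : Module.End R M) (c : ℕ) :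
    f ^ c ∈ Submodule.span R ((f ^ ·) '' Set.Iio (Module.finrank R M)) := by
  classical
  have hdeg : (X ^ c %ₘ f.charpoly).degree < Module.finrank R M := by
    rw [← f.charpoly_natDegree, ← degree_eq_natDegree f.charpoly_monic.ne_zero]
    exact degree_modByMonic_lt _ f.charpoly_monic
  have hmem := mem_degreeLT.mpr hdeg
  rw [degreeLT_eq_span_X_pow] at hmem
  rw [f.pow_eq_aeval_mod_charpoly]
  refine Submodule.span_induction (p := fun p _ => aeval f p ∈ _) ?_ ?_ ?_ ?_ hmem
  · simp only [Finset.coe_image, Finset.coe_range, Set.mem_image, Set.mem_Iio]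
    rintro _ ⟨m, hm, rfl⟩
    exact Submodule.subset_span ⟨m, hm, by simp⟩
  · simp
  · intro p q _ _ hp hq
    simpa using add_mem hp hq
  · intro a p _ hp
    simpa using Submodule.smul_mem _ a hp

open scoped IsMulCommutative in
theorem List.prod_ofFn_pow_update {M : Type*} [Monoid M] {n : ℕ} {x : Fin n → M}
    (hx : ∀ i j, Commute (x i) (x j)) (a : Fin n → ℕ) (i : Fin n) (c : ℕ) :
    (List.ofFn fun j => x j ^ Function.update a i c j).prod =
      x i ^ c * (List.ofFn fun j => x j ^ Function.update a i 0 j).prod := by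
  have := Submonoid.isMulCommutative_closure M (s := Set.range x) <| by
    rintro _ ⟨i, rfl⟩ _ ⟨j, rfl⟩
    exact hx i j
  let y (j : Fin n) : Submonoid.closure (Set.range x) := ⟨x j, Submonoid.subset_closure ⟨j, rfl⟩⟩
  have hprod (b : Fin n → ℕ) : (List.ofFn fun j => x j ^ b j).prod = ↑(∏ j, y j ^ b j) := by
    rw [← List.prod_ofFn, Submonoid.coe_list_prod, List.map_ofFn]
    rfl
  rw [hprod, hprod, Fintype.prod_eq_mul_prod_compl i, Fintype.prod_eq_mul_prod_compl i]
  simp only [Function.update_self, pow_zero, one_mul, Submonoid.coe_mul, SubmonoidClass.coe_pow]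
  congr 2
  refine Finset.prod_congr rfl fun j hj => ?_
  rw [Finset.mem_compl, Finset.mem_singleton] at hj
  simp only [Function.update_of_ne hj]

theorem List.prod_ofFn_pow_mem_closure {M : Type*} [Monoid M] {n : ℕ} (x : Fin n → M)
    (a : Fin n → ℕ) : (List.ofFn fun i => x i ^ a i).prod ∈ Submonoid.closure (Set.range x) :=
  Submonoid.list_prod_mem _ <| List.forall_mem_ofFn_iff.mpr fun i =>
    pow_mem (Submonoid.subset_closure (Set.mem_range_self i)) _

theorem Module.End.mem_invtSubmodule_of_mem_closure {R M : Type*} [Semiring R]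
    [AddCommMonoid M] [Module R M] {s : Set (Module.End R M)} {p : Submodule R M}
    (hs : ∀ f ∈ s, p ∈ f.invtSubmodule) {g : Module.End R M} (hg : g ∈ Submonoid.closure s) :
    p ∈ g.invtSubmodule :=
  Submonoid.closure_induction hs (by simp)
    (fun f _ _ _ hf hg => Module.End.invtSubmodule.comp f hf hg) hg

section BoundedWords

variable {R M : Type*} [Semiring R] [AddCommMonoid M] [Module R M] {n r : ℕ}
  (x : Fin n → Module.End R M) (v : Fin r → M)

def boundedWordSpan (d : ℕ) : Submodule R M :=
  Submodule.span R {w : M | ∃ (a : Fin n → ℕ) (j : Fin r),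
    (∀ i, a i ≤ d - 1) ∧ w = (List.ofFn fun i => x i ^ a i).prod (v j)}

theorem mem_boundedWordSpan_self (d : ℕ) (j : Fin r) :
    v j ∈ boundedWordSpan x v d :=
  Submodule.subset_span ⟨0, j, by simp, by simp⟩

theorem boundedWordSpan_le (d : ℕ)
    {p : Submodule R M} (hv : ∀ j, v j ∈ p) (hp : ∀ i, p ∈ (x i).invtSubmodule) :
    boundedWordSpan x v d ≤ p := by
  refine Submodule.span_le.mpr ?_
  rintro _ ⟨a, j, -, rfl⟩
  have hword := List.prod_ofFn_pow_mem_closure x a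
  exact Module.End.mem_invtSubmodule_of_mem_closure (by rintro _ ⟨i, rfl⟩; exact hp i) hword (hv j)

end BoundedWords

theorem boundedWordSpan_mem_invtSubmodule {R M : Type*} [CommRing R] [Nontrivial R]
    [AddCommGroup M] [Module R M] [Module.Free R M] [Module.Finite R M] {n r : ℕ}
    (x : Fin n → Module.End R M) (v : Fin r → M) (hx : ∀ i j, Commute (x i) (x j))
    (i : Fin n) : boundedWordSpan x v (Module.finrank R M) ∈ (x i).invtSubmodule := by
  rw [Module.End.mem_invtSubmodule, boundedWordSpan, Submodule.span_le]
  rintro _ ⟨a, j, ha, rfl⟩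
  set P₀ := (List.ofFn fun l => x l ^ Function.update a i 0 l).prod
  have hword (m : ℕ) : (List.ofFn fun l => x l ^ Function.update a i m l).prod = x i ^ m * P₀ :=
    List.prod_ofFn_pow_update hx a i m
  have hxa : x i * (List.ofFn fun l => x l ^ a l).prod = x i ^ (a i + 1) * P₀ := by
    rw [pow_succ', mul_assoc, ← hword, Function.update_eq_self]
  change (x i * _) (v j) ∈ boundedWordSpan x v (Module.finrank R M)
  rw [hxa]
  refine Submodule.span_induction (p := fun g _ => (g * P₀) (v j) ∈ boundedWordSpan x v _)
    ?_ ?_ ?_ ?_ ((x i).pow_mem_span_pow_lt_finrank (a i + 1))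
  · rintro _ ⟨m, hm, rfl⟩
    refine Submodule.subset_span ⟨Function.update a i m, j, fun l => ?_, by rw [hword]⟩
    rcases eq_or_ne l i with rfl | hl
    · simp only [Function.update_self]
      exact Nat.le_sub_one_of_lt hm
    · simp only [Function.update_of_ne hl, ha l]
  · simp
  · intro f g _ _ hf hg
    simpa only [add_mul, LinearMap.add_apply] using add_mem hf hg
  · intro c f _ hf
    simpa only [smul_mul_assoc, LinearMap.smul_apply] using Submodule.smul_mem _ c hf

theorem stable_iff_bounded_words_span (k : Type*) [Field k]
    (V : Type*) [AddCommGroup V] [Module k V] [FiniteDimensional k V]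
    (d n r : ℕ) (hd : Module.finrank k V = d)
    (x : Fin n → Module.End k V) (hx : ∀ i j, Commute (x i) (x j))
    (v : Fin r → V) :
    (∀ W : Submodule k V, (∀ j, v j ∈ W) → (∀ i, ∀ w ∈ W, x i w ∈ W) → W = ⊤) ↔
      Submodule.span k
          {w : V | ∃ (a : Fin n → ℕ) (j : Fin r),
            (∀ i, a i ≤ d - 1) ∧ w = (List.ofFn fun i => x i ^ a i).prod (v j)} = ⊤ := by
  subst hd
  refine ⟨fun hstable => ?_, fun hspan W hv hW => ?_⟩
  · exact hstable _ (mem_boundedWordSpan_self x v _) (boundedWordSpan_mem_invtSubmodule x v hx)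
  · exact eq_top_iff.mpr (hspan ▸ boundedWordSpan_le x v _ hv hW)
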